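/- Let k be a field, n ≥ 2, and R = k[x₁,...,xₙ]/(x₁², {x_i x_j : i ≠ j}). The sequence Rⁿ →^{δ₁} R →^{x₁} R, where δ₁(r₁,...,rₙ) = x₁r₁ + x₂r₂ + ⋯ + xₙrₙ, is exact at the middle term: ker(multiplication by x₁) = im(δ₁). -/

import Mathlib

open MvPolynomial

noncomputable section

/-- The ideal of `k[x₁,…,xₘ]` (with `m = n + 2 ≥ 2` variables) generated by `x₁²`
together with all mixed products `xᵢxⱼ`, `i ≠ j`. -/
def Jn (k : Type*) [Field k] (n : ℕ) : Ideal (MvPolynomial (Fin (n + 2)) k) :=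
  Ideal.span ({X 0 ^ 2} ∪ {p | ∃ i j : Fin (n + 2), i ≠ j ∧ p = X i * X j})

/-- The ring `R = k[x₁,…,xₘ]/(x₁², xᵢxⱼ (i ≠ j))`. -/
abbrev Rn (k : Type*) [Field k] (n : ℕ) := MvPolynomial (Fin (n + 2)) k ⧸ Jn k n

/-- The image of the variable `xᵢ` in `Rn k n`. -/
def vn (k : Type*) [Field k] (n : ℕ) (i : Fin (n + 2)) : Rn k n :=
  Ideal.Quotient.mk (Jn k n) (X i)


-- auxiliary: the test hom to dual numbers
lemma Jn_le_ker (k : Type*) [Field k] (n : ℕ) :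
    Jn k n ≤ RingHom.ker (aeval (R := k) (fun i : Fin (n + 2) =>
      if i = 0 then (DualNumber.eps : DualNumber k) else 0)).toRingHom := by
  rw [Jn, Ideal.span_le]
  rintro p (rfl | ⟨i, j, hij, rfl⟩)
  · simp [RingHom.mem_ker, sq, DualNumber.eps_mul_eps]
  · simp only [SetLike.mem_coe, RingHom.mem_ker, AlgHom.toRingHom_eq_coe, RingHom.coe_coe,
      map_mul, aeval_X]
    rcases eq_or_ne i 0 with rfl | hi
    · rw [if_neg (Ne.symm hij), mul_zero]
    · rw [if_neg hi, zero_mul]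

/-- Exactness of `Rᵐ →^{δ₁} R →^{x₁} R` at the middle term, where
`δ₁ (r₁,…,rₘ) = x₁ r₁ + ⋯ + xₘ rₘ`. -/
theorem stmt15 (k : Type*) [Field k] (n : ℕ) :
    ∀ r : Rn k n, vn k n 0 * r = 0 ↔
      ∃ c : Fin (n + 2) → Rn k n, r = ∑ i : Fin (n + 2), vn k n i * c i := by
  intro r
  constructor
  · intro h
    obtain ⟨p, rfl⟩ := Ideal.Quotient.mk_surjective r
    -- X 0 * p ∈ Jn
    have hmem : X 0 * p ∈ Jn k n := by
      rwa [← Ideal.Quotient.eq_zero_iff_mem, map_mul]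
    set φ := aeval (R := k) (fun i : Fin (n + 2) =>
      if i = 0 then (DualNumber.eps : DualNumber k) else 0) with hφ
    have hker := Jn_le_ker k n hmem
    simp only [RingHom.mem_ker, AlgHom.toRingHom_eq_coe, RingHom.coe_coe, map_mul, aeval_X,
      if_pos rfl] at hker
    -- fst (φ p) = constantCoeff p
    have hfst : (φ p).fst = constantCoeff p := by
      have : (TrivSqZeroExt.fstHom k k k).comp φ = aeval (fun _ => 0) := by
        ext i
        simp only [AlgHom.comp_apply, aeval_X, hφ]
        rcases eq_or_ne i 0 with rfl | hi
        · simp [DualNumber.fst_eps]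
        · simp [hi]
    -- compute fst of the aeval
      calc (φ p).fst = ((TrivSqZeroExt.fstHom k k k).comp φ) p := rfl
        _ = aeval (fun _ => (0:k)) p := by rw [this]
        _ = constantCoeff p := by
            rw [show (fun _ : Fin (n+2) => (0:k)) = (fun i => (0:k) ) from rfl]
            simp [aeval_zero']
    have hc : constantCoeff p = 0 := by
      have := congrArg TrivSqZeroExt.snd hker
      rw [TrivSqZeroExt.snd_mul] at this
      rw [← hfst]
      simpa [hφ] using this
    -- p ∈ ideal span of X's
    have hp : p ∈ Ideal.span (X '' (Set.univ : Set (Fin (n + 2))) :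
        Set (MvPolynomial (Fin (n + 2)) k)) := by
      rw [mem_ideal_span_X_image]
      intro m hm
      rcases eq_or_ne m 0 with rfl | hne
      · exact absurd hc (by simpa [constantCoeff_eq, coeff] using mem_support_iff.mp hm)
      · obtain ⟨i, hi⟩ := Finsupp.ne_iff.mp hne
        exact ⟨i, trivial, by simpa using hi⟩
    -- push to quotient
    have hq : Ideal.Quotient.mk (Jn k n) p ∈ Ideal.span (Set.range (vn k n)) := by
      have h2 := Ideal.mem_map_of_mem (Ideal.Quotient.mk (Jn k n)) hp
      rw [Ideal.map_span] at h2
      refine Ideal.span_mono ?_ h2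
      rintro q ⟨x, ⟨i, -, rfl⟩, rfl⟩
      exact ⟨i, rfl⟩
    rw [← Ideal.submodule_span_eq, Submodule.mem_span_range_iff_exists_fun] at hq
    obtain ⟨c, hc'⟩ := hq
    exact ⟨c, by rw [← hc']; exact Finset.sum_congr rfl fun i _ => (mul_comm _ _)⟩
  · rintro ⟨c, rfl⟩
    rw [Finset.mul_sum]
    refine Finset.sum_eq_zero fun i _ => ?_
    have : vn k n 0 * vn k n i = 0 := by
      rw [vn, vn, ← map_mul, Ideal.Quotient.eq_zero_iff_mem]
      rcases eq_or_ne i 0 with rfl | hi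
      · exact Ideal.subset_span (Or.inl (by simp [sq]))
      · exact Ideal.subset_span (Or.inr ⟨0, i, Ne.symm hi, rfl⟩)
    rw [← mul_assoc, this, zero_mul]

end
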